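/- Non-resonance of exponents (Proposition 1, case 2): Let κ > 0, let n ≥ 1, and fix indices i₁,…,i_N ∈ {1,…,n+1}. Suppose i_s = i_j = p+1 for some s < j. With h₁ = Λ₁, h_{k+1} = Λ₁ - α₁ - ⋯ - α_k in the weight lattice of A_n, the quantity η_j - η_s := (1/κ)[(h_{p+1} + h_{i_{s+1}} + ⋯ + h_{i_{j-1}}, -(e₁ - e_{p+1})) + (h_{p+1} + h_{i_{s+1}} + ⋯ + h_{i_{j-1}} - (j-s)Λ₁, Λ₁) + (j-s)] is strictly positive. -/

import Mathlib

/-- `e_k` (1-indexed, `1 ≤ k ≤ m`): `k`-th standard basis vector of `ℝᵐ`. -/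
def evec (m k : ℕ) : Fin m → ℝ := fun t => if (t : ℕ) + 1 = k then 1 else 0

/-- `h_k = Λ₁ - α₁ - ⋯ - α_{k-1} = e_k - (1/m)(e₁ + ⋯ + e_m)`; in particular
`Λ₁ = h₁`. -/
noncomputable def hvec (m k : ℕ) : Fin m → ℝ := fun t => evec m k t - 1 / m

/-- Standard inner product on `ℝᵐ`. -/
def ip (m : ℕ) (x y : Fin m → ℝ) : ℝ := ∑ t, x t * y t

/-!
Since `i s = p + 1`, the vector `H = h_{p+1} + ∑_{s<r<j} h_{i_r}` is `∑_{s≤r<j} h_{i_r}`. As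
`-(e₁ - e_{p+1}) + Λ₁ = h_{p+1}` and `(h_k, h_l) = δ_{kl} - 1/m`, the bracket collapses to
`(H, h_{p+1}) + (j - s)/m`, which is the number of `r ∈ [s, j)` with `i_r = p + 1`; this count
is at least one because of `r = s`.
-/

open Finset

lemma evec_eq_single {m k : ℕ} (hk : 1 ≤ k) (hkm : k ≤ m) :
    evec m k = Pi.single ⟨k - 1, by omega⟩ 1 := by
  ext t
  simp only [evec, Pi.single_apply, Fin.ext_iff]
  congr 1
  apply propext
  omega

lemma sum_hvec {m k : ℕ} (hk : 1 ≤ k) (hkm : k ≤ m) : ∑ t, hvec m k t = 0 := by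
  have hm : (m : ℝ) ≠ 0 := by norm_cast; omega
  simp [hvec, sum_sub_distrib, evec_eq_single hk hkm, mul_inv_cancel₀ hm]

lemma hvec_dotProduct {m k : ℕ} (hk : 1 ≤ k) (hkm : k ≤ m) (v : Fin m → ℝ) :
    hvec m k ⬝ᵥ v = v ⟨k - 1, by omega⟩ - (∑ t, v t) / m := by
  have : hvec m k = Pi.single ⟨k - 1, by omega⟩ 1 - fun _ => 1 / (m : ℝ) := by
    ext t
    simp [hvec, evec_eq_single hk hkm]
  rw [this, sub_dotProduct, single_dotProduct, one_mul]
  simp [dotProduct, div_eq_inv_mul, mul_sum]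

lemma hvec_dotProduct_hvec {m k l : ℕ} (hk : 1 ≤ k) (hkm : k ≤ m) (hl : 1 ≤ l) (hlm : l ≤ m) :
    hvec m k ⬝ᵥ hvec m l = (if k = l then 1 else 0) - 1 / m := by
  rw [hvec_dotProduct hk hkm, sum_hvec hl hlm, zero_div, sub_zero]
  simp only [hvec, evec]
  congr 2
  apply propext
  omega

lemma sum_hvec_dotProduct_hvec {ι : Type*} {m l : ℕ} (F : Finset ι) (i : ι → ℕ)
    (hi : ∀ r ∈ F, 1 ≤ i r ∧ i r ≤ m) (hl : 1 ≤ l) (hlm : l ≤ m) :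
    (∑ r ∈ F, hvec m (i r)) ⬝ᵥ hvec m l = #{r ∈ F | i r = l} - #F / m := by
  rw [sum_dotProduct,
    sum_congr rfl fun r hr => hvec_dotProduct_hvec (hi r hr).1 (hi r hr).2 hl hlm]
  simp [sum_sub_distrib, sum_boole, div_eq_mul_inv]

lemma neg_sub_evec_add_hvec_one (m l : ℕ) :
    (fun t => -(evec m 1 t - evec m l t)) + hvec m 1 = hvec m l := by
  ext t
  simp only [Pi.add_apply, hvec]
  ring

lemma ip_neg_sub_evec_add_ip_sub_hvec_one {m : ℕ} (hm : 1 ≤ m) (x : Fin m → ℝ) (c : ℝ)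
    (l : ℕ) :
    ip m x (fun t => -(evec m 1 t - evec m l t)) +
        ip m (fun t => x t - c * hvec m 1 t) (hvec m 1) + c =
      x ⬝ᵥ hvec m l + c / m := by
  have h11 := hvec_dotProduct_hvec le_rfl hm le_rfl hm
  change x ⬝ᵥ _ + (x - c • hvec m 1) ⬝ᵥ hvec m 1 + c = _
  rw [sub_dotProduct, smul_dotProduct, h11, ← neg_sub_evec_add_hvec_one m l, dotProduct_add]
  simp only [if_true, smul_eq_mul]
  ring

theorem nonresonance_case2_general (m n : ℕ) (κ : ℝ) (i : ℕ → ℕ) (s j p : ℕ)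
    (hκ : 0 < κ) (hm : n + 1 ≤ m)
    (hi : ∀ t, 1 ≤ i t ∧ i t ≤ n + 1)
    (hsj : s < j)
    (his : i s = p + 1) :
    0 < (1 / κ) *
      (ip m (fun t => hvec m (p + 1) t + ∑ r ∈ Finset.Ico (s + 1) j, hvec m (i r) t)
          (fun t => -(evec m 1 t - evec m (p + 1) t)) +
        ip m (fun t => (hvec m (p + 1) t + ∑ r ∈ Finset.Ico (s + 1) j, hvec m (i r) t)
            - ((j : ℝ) - s) * hvec m 1 t)
          (hvec m 1) +
        ((j : ℝ) - s)) := by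
  have hi' : ∀ r ∈ Ico s j, 1 ≤ i r ∧ i r ≤ m := fun r _ => ⟨(hi r).1, (hi r).2.trans hm⟩
  have hs : s ∈ Ico s j := by simp [hsj]
  have hx : (fun t => hvec m (p + 1) t + ∑ r ∈ Ico (s + 1) j, hvec m (i r) t) =
      ∑ r ∈ Ico s j, hvec m (i r) := by
    ext t
    rw [Finset.sum_apply, sum_eq_sum_Ico_succ_bot hsj, his]
  have hcount : 0 < #{r ∈ Ico s j | i r = p + 1} := card_pos.mpr ⟨s, by simp [hs, his]⟩
  rw [ip_neg_sub_evec_add_ip_sub_hvec_one (by omega), hx,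
    sum_hvec_dotProduct_hvec _ _ hi' (by omega) (his ▸ (hi' s hs).2),
    Nat.card_Ico, Nat.cast_sub hsj.le, sub_add_cancel]
  positivity

/-- Non-resonance of exponents (Proposition 1, case 2): if `i_s = i_j = p + 1`
with `s < j`, then the quantity `η_j - η_s` is strictly positive for `κ > 0`. -/
theorem nonresonance_case2 (m n N : ℕ) (κ : ℝ) (i : ℕ → ℕ) (s j p : ℕ)
    (hκ : 0 < κ) (hn : 1 ≤ n) (hm : n + 1 ≤ m)
    (hi : ∀ t, 1 ≤ i t ∧ i t ≤ n + 1)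
    (hs : 1 ≤ s) (hsj : s < j) (hjN : j ≤ N)
    (his : i s = p + 1) (hij : i j = p + 1) :
    0 < (1 / κ) *
      (ip m (fun t => hvec m (p + 1) t + ∑ r ∈ Finset.Ico (s + 1) j, hvec m (i r) t)
          (fun t => -(evec m 1 t - evec m (p + 1) t)) +
        ip m (fun t => (hvec m (p + 1) t + ∑ r ∈ Finset.Ico (s + 1) j, hvec m (i r) t)
            - ((j : ℝ) - s) * hvec m 1 t)
          (hvec m 1) +
        ((j : ℝ) - s)) :=
  nonresonance_case2_general m n κ i s j p hκ hm hi hsj his
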